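/- arXiv:1506.06083 — 3 statements merged into one kernel-verified Lean document; each statement's English description precedes it below -/
import Mathlib

section
/- Let S be a subspace of ℝ^m with m ≥ n+1. Then S contains n+1 linearly independent vectors if and only if for every choice of n coordinate indices 1 ≤ j₁ < j₂ < ⋯ < jₙ ≤ m there exists a nonzero vector x ∈ S with x_{j₁} = x_{j₂} = ⋯ = x_{jₙ} = 0. -/
/-!
Restricting `S` to `n` coordinates is a linear map `S → ℝⁿ`, which has a nonzero kernel as soon
as `dim S > n`. Conversely, some `dim S` coordinates already detect every nonzero vector of `S`:
pick a coordinate on which some vector of `S` is nonzero; killing it lowers the dimension, so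
induct. If `dim S ≤ n`, these coordinates extend to `n` increasing indices on which only `0 ∈ S`
vanishes.
-/

open Module

namespace Submodule

variable {K V ι : Type*} [Field K]

theorem exists_linearIndependent_fin_iff_le_finrank [AddCommGroup V] [Module K V]
    (S : Submodule K V) [FiniteDimensional K S] {k : ℕ} :
    (∃ v : Fin k → V, (∀ i, v i ∈ S) ∧ LinearIndependent K v) ↔ k ≤ finrank K S := by
  constructor
  · rintro ⟨v, hvS, hv⟩
    have hv' : LinearIndependent K (fun i ↦ (⟨v i, hvS i⟩ : S)) :=
      LinearIndependent.of_comp S.subtype hv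
    simpa using hv'.fintype_card_le_finrank
  · intro hk
    obtain ⟨v, hv⟩ := exists_linearIndependent_of_le_finrank hk
    exact ⟨fun i ↦ v i, fun i ↦ (v i).2, hv.map' S.subtype S.ker_subtype⟩

theorem exists_ne_zero_apply_eq_zero_of_card_lt_finrank {κ : Type*} [Fintype κ]
    (S : Submodule K (ι → K)) [FiniteDimensional K S] (j : κ → ι)
    (hj : Fintype.card κ < finrank K S) : ∃ x ∈ S, x ≠ 0 ∧ ∀ i, x (j i) = 0 := by
  let restrict : S →ₗ[K] κ → K := LinearMap.funLeft K K j ∘ₗ S.subtype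
  have hker : LinearMap.ker restrict ≠ ⊥ :=
    restrict.ker_ne_bot_of_finrank_lt (by simpa using hj)
  obtain ⟨x, hx, hx0⟩ := (Submodule.ne_bot_iff _).mp hker
  exact ⟨x, x.2, by simpa using hx0, fun i ↦ congrFun (LinearMap.mem_ker.mp hx) i⟩

theorem exists_finset_card_le_finrank_vanishing_imp_eq_zero
    (S : Submodule K (ι → K)) [FiniteDimensional K S] :
    ∃ J : Finset ι, J.card ≤ finrank K S ∧ ∀ x ∈ S, (∀ j ∈ J, x j = 0) → x = 0 := by
  induction hd : finrank K S using Nat.strong_induction_on generalizing S with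
  | _ d ih =>
  classical
  rcases eq_or_ne S ⊥ with rfl | hS
  · exact ⟨∅, by simp, fun x hx _ ↦ (mem_bot K).mp hx⟩
  obtain ⟨x₀, hx₀S, hx₀⟩ := exists_mem_ne_zero_of_ne_bot hS
  obtain ⟨j₀, hj₀⟩ : ∃ j, x₀ j ≠ 0 := Function.ne_iff.mp hx₀
  set T := S ⊓ LinearMap.ker (LinearMap.proj j₀ : (ι → K) →ₗ[K] K)
  have : FiniteDimensional K T := finiteDimensional_of_le inf_le_left
  have hTS : T < S := lt_of_le_of_ne inf_le_left fun h ↦ hj₀ (h ▸ hx₀S).2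
  have hrank := finrank_lt_finrank_of_lt hTS
  obtain ⟨J, hJ, hJT⟩ := ih _ (hd ▸ hrank) T rfl
  refine ⟨insert j₀ J, (J.card_insert_le j₀).trans (by omega), fun x hx hxJ ↦ ?_⟩
  exact hJT x ⟨hx, hxJ j₀ (J.mem_insert_self j₀)⟩ fun j hj ↦ hxJ j (J.mem_insert_of_mem hj)

end Submodule

theorem Finset.exists_strictMono_fin_subset_range {ι : Type*} [LinearOrder ι] [Fintype ι]
    (J : Finset ι) {n : ℕ} (hJ : J.card ≤ n) (hn : n ≤ Fintype.card ι) :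
    ∃ j : Fin n → ι, StrictMono j ∧ ∀ a ∈ J, a ∈ Set.range j := by
  obtain ⟨J', hJJ', hJ'⟩ := Finset.exists_superset_card_eq hJ hn
  refine ⟨J'.orderEmbOfFin hJ', (J'.orderEmbOfFin hJ').strictMono, fun a ha ↦ ?_⟩
  rw [range_orderEmbOfFin]
  exact hJJ' ha

/-- A subspace `S` of `ℝ^m` (with `m ≥ n+1`) contains `n+1` linearly
independent vectors iff for every choice of `n` coordinate indices
`j₁ < j₂ < ⋯ < jₙ` there is a nonzero `x ∈ S` vanishing on those coordinates. -/
theorem stmt0 (m n : ℕ) (hm : n + 1 ≤ m) (S : Submodule ℝ (Fin m → ℝ)) :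
    (∃ v : Fin (n + 1) → (Fin m → ℝ), (∀ i, v i ∈ S) ∧ LinearIndependent ℝ v) ↔
      (∀ j : Fin n → Fin m, StrictMono j →
        ∃ x ∈ S, x ≠ 0 ∧ ∀ i, x (j i) = 0) := by
  rw [S.exists_linearIndependent_fin_iff_le_finrank]
  constructor
  · intro hS j _
    exact S.exists_ne_zero_apply_eq_zero_of_card_lt_finrank j (by simpa using hS)
  · intro h
    by_contra! hS
    obtain ⟨J, hJ, hJS⟩ := S.exists_finset_card_le_finrank_vanishing_imp_eq_zero
    obtain ⟨j, hj, hJj⟩ :=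
      J.exists_strictMono_fin_subset_range (n := n) (by omega) (by rw [Fintype.card_fin]; omega)
    obtain ⟨x, hxS, hx0, hxj⟩ := h j hj
    refine hx0 (hJS x hxS fun a ha ↦ ?_)
    obtain ⟨i, rfl⟩ := hJj a ha
    exact hxj i
end

section
/- Let M be a block-diagonal matrix over ℤ with diagonal blocks M₁, …, Mₙ (not necessarily square). Then det(M,k) = gcd over all tuples (k₁,…,kₙ) with k₁+⋯+kₙ = k of det(M₁,k₁)·det(M₂,k₂)⋯det(Mₙ,kₙ). -/
/-!
A `k × k` minor of `blockDiagonal' B` selects `k` rows and `k` columns, which fall into the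
blocks. If some block contributes more rows than columns, those rows are supported on too few
columns and the minor vanishes; otherwise, after sorting rows and columns by block, the minor is
up to sign the block-diagonal matrix of one square minor per block, hence a product of minors of
the blocks. So the right-hand side divides every `k × k` minor. Conversely, square minors of the
blocks of sizes `κ i` with `∑ κ i = k` assemble into a `k × k` minor equal to their product, and
since gcd distributes over products, `det(M, k)` divides `∏ det(B i, κ i)`.
-/

open Finset Matrix

/-- `det(M, k)`: the gcd of all `k × k` minors of `M`. -/
def minorGcd {α β : Type} [Fintype α] [Fintype β] (M : Matrix α β ℤ) (k : ℕ) : ℤ :=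
  Finset.univ.gcd fun fg : (Fin k → α) × (Fin k → β) => (M.submatrix fg.1 fg.2).det

namespace Matrix

variable {R ι κ : Type*} [CommRing R]

theorem det_blockDiagonal'_eq_prod [Fintype ι] [DecidableEq ι] {m : ι → Type*}
    [∀ i, Fintype (m i)] [∀ i, DecidableEq (m i)] (M : ∀ i, Matrix (m i) (m i) R) :
    (blockDiagonal' M).det = ∏ i, (M i).det := by
  let _ : LinearOrder ι := LinearOrder.lift' _ (Fintype.equivFin ι).injective
  rw [(blockTriangular_blockDiagonal' M).det_fintype]
  refine prod_congr rfl fun i _ => ?_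
  let e : m i ≃ {x : Σ j, m j // x.1 = i} :=
    { toFun := fun a => ⟨⟨i, a⟩, rfl⟩
      invFun := fun x => x.2 ▸ x.1.2
      left_inv := fun _ => rfl
      right_inv := by rintro ⟨⟨j, b⟩, rfl⟩; rfl }
  rw [← det_submatrix_equiv_self e]
  congr 1
  ext a b
  exact blockDiagonal'_apply_eq M i a b

theorem det_submatrix_equiv [Fintype ι] [DecidableEq ι] [Fintype κ] [DecidableEq κ]
    (A : Matrix ι ι R) (e₁ e₂ : κ ≃ ι) :
    (A.submatrix e₁ e₂).det = Equiv.Perm.sign (e₂.trans e₁.symm) * A.det := by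
  have : A.submatrix e₁ e₂ = (A.submatrix e₁ e₁).submatrix id (e₂.trans e₁.symm) := by
    ext; simp
  rw [this, det_permute', det_submatrix_equiv_self]

theorem det_eq_zero_of_card_lt [Fintype ι] [DecidableEq ι] (A : Matrix ι ι R)
    {rows cols : Finset ι} (hcard : #cols < #rows) (hA : ∀ i ∈ rows, ∀ j ∉ cols, A i j = 0) :
    A.det = 0 := by
  refine (det_apply A).trans <| sum_eq_zero fun σ _ => ?_
  obtain ⟨j, hj, hjc⟩ := exists_mem_notMem_of_card_lt_card
    (hcard.trans_eq (card_map σ.symm.toEmbedding).symm)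
  have hσj : σ j ∈ rows := by simpa using hj
  rw [prod_eq_zero (f := fun i => A (σ i) i) (mem_univ j) (hA _ hσj j hjc), smul_zero]

variable {o : Type*} [DecidableEq o] {m n m' n' : o → Type*}

theorem blockDiagonal'_submatrix_sigmaMap {α : Type*} [Zero α] (M : ∀ i, Matrix (m i) (n i) α)
    (ρ : ∀ i, m' i → m i) (γ : ∀ i, n' i → n i) :
    (blockDiagonal' M).submatrix (Sigma.map id ρ) (Sigma.map id γ) =
      blockDiagonal' fun i => (M i).submatrix (ρ i) (γ i) := by
  ext ⟨i, a⟩ ⟨j, b⟩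
  by_cases h : i = j
  · subst h; simp [Sigma.map]
  · simp [Sigma.map, blockDiagonal'_apply_ne _ _ _ h]

end Matrix

def Sigma.fiberSnd {ι κ : Type*} {m : ι → Type*} (f : κ → Σ i, m i) (i : ι)
    (j : {j // (f j).1 = i}) : m i :=
  j.2 ▸ (f j).2

theorem Sigma.comp_sigmaFiberEquiv {ι κ : Type*} {m : ι → Type*} (f : κ → Σ i, m i) :
    f ∘ Equiv.sigmaFiberEquiv (fun j => (f j).1) = Sigma.map id (Sigma.fiberSnd f) := by
  funext p
  obtain ⟨_, j, rfl⟩ := p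
  rfl

theorem Fintype.sum_card_fiber {ι κ : Type*} [Fintype ι] [DecidableEq ι] [Fintype κ]
    {m : ι → Type*} (f : κ → Σ i, m i) :
    ∑ i, Fintype.card {j // (f j).1 = i} = Fintype.card κ := by
  rw [← Fintype.card_sigma, Fintype.card_congr (Equiv.sigmaFiberEquiv _)]

section GCD

variable {α ι : Type*} [CommMonoidWithZero α] [NormalizedGCDMonoid α]

theorem Finset.dvd_mul_gcd_of_forall_dvd_mul {β : Type*} {s : Finset β} {f : β → α} {a c : α}
    (h : ∀ b ∈ s, a ∣ c * f b) : a ∣ c * s.gcd f :=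
  (dvd_gcd h).trans (gcd_mul_left' s f c).dvd

theorem Finset.dvd_prod_gcd_of_forall_dvd_prod {X : ι → Type*} [∀ i, Fintype (X i)]
    [∀ i, Nonempty (X i)] [DecidableEq ι] {F : ∀ i, X i → α} {a : α} (t : Finset ι)
    (h : ∀ x : ∀ i, X i, a ∣ ∏ i ∈ t, F i (x i)) : a ∣ ∏ i ∈ t, univ.gcd (F i) := by
  -- a cofactor `c` lets the induction absorb the gcd of one factor at a time
  suffices ∀ c, (∀ x : ∀ i, X i, a ∣ c * ∏ i ∈ t, F i (x i)) → a ∣ c * ∏ i ∈ t, univ.gcd (F i) by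
    simpa using this 1 (by simpa using h)
  clear h
  induction t using Finset.induction with
  | empty => simp only [prod_empty]; exact fun c h => h fun _ => Classical.arbitrary _
  | insert j t hj ih =>
    intro c hc
    rw [prod_insert hj, mul_left_comm, mul_comm]
    refine Finset.dvd_mul_gcd_of_forall_dvd_mul fun y _ => ?_
    rw [mul_right_comm]
    refine ih _ fun x => ?_
    have := hc (Function.update x j y)
    rwa [prod_insert hj, Function.update_self, ← mul_assoc,
      prod_congr rfl fun i hi => by rw [Function.update_of_ne (ne_of_mem_of_not_mem hi hj)]] at this

theorem Fintype.dvd_prod_gcd_of_forall_dvd_prod [Fintype ι] [DecidableEq ι] {X : ι → Type*}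
    [∀ i, Fintype (X i)] {F : ∀ i, X i → α} {a : α}
    (h : ∀ x : ∀ i, X i, a ∣ ∏ i, F i (x i)) : a ∣ ∏ i, univ.gcd (F i) := by
  by_cases hX : ∀ i, Nonempty (X i)
  · exact Finset.dvd_prod_gcd_of_forall_dvd_prod univ h
  · obtain ⟨i, hi⟩ := not_forall.mp hX
    rw [not_nonempty_iff] at hi
    rw [prod_eq_zero (f := fun i => univ.gcd (F i)) (mem_univ i) (by simp)]
    exact dvd_zero a

end GCD

theorem minorGcd_dvd_det_submatrix {α β κ : Type} [Fintype α] [Fintype β] [Fintype κ]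
    [DecidableEq κ] (M : Matrix α β ℤ) (ρ : κ → α) (γ : κ → β) :
    minorGcd M (Fintype.card κ) ∣ (M.submatrix ρ γ).det := by
  let e := Fintype.equivFin κ
  have := gcd_dvd (mem_univ (ρ ∘ e.symm, γ ∘ e.symm))
    (f := fun fg : (Fin _ → α) × (Fin _ → β) => (M.submatrix fg.1 fg.2).det)
  rwa [← submatrix_submatrix, det_submatrix_equiv_self] at this

section BlockDiagonal

variable {ι : Type} [Fintype ι] [DecidableEq ι] {m n : ι → Type} (M : ∀ i, Matrix (m i) (n i) ℤ)
  {κ : Type} [Fintype κ] [DecidableEq κ] (f : κ → Σ i, m i) (g : κ → Σ i, n i)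

theorem det_blockDiagonal'_submatrix_eq_zero
    (h : ¬∀ i, Fintype.card {j // (f j).1 = i} = Fintype.card {j // (g j).1 = i}) :
    ((blockDiagonal' M).submatrix f g).det = 0 := by
  obtain ⟨i, hi⟩ : ∃ i, Fintype.card {j // (g j).1 = i} < Fintype.card {j // (f j).1 = i} := by
    by_contra! hle
    exact h fun i => (sum_eq_sum_iff_of_le fun i _ => hle i).mp
      ((Fintype.sum_card_fiber f).trans (Fintype.sum_card_fiber g).symm) i (mem_univ i)
  rw [Fintype.card_subtype, Fintype.card_subtype] at hi
  refine det_eq_zero_of_card_lt _ hi fun a ha b hb => ?_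
  simp only [mem_filter_univ] at ha hb
  exact blockDiagonal'_apply_ne M _ _ (ha.trans_ne (Ne.symm hb))

variable [∀ i, Fintype (m i)] [∀ i, Fintype (n i)]

theorem minorGcd_blockDiagonal'_dvd_prod {k : ℕ} (κ : ι → ℕ) (hκ : ∑ i, κ i = k) :
    minorGcd (blockDiagonal' M) k ∣ ∏ i, minorGcd (M i) (κ i) := by
  refine Fintype.dvd_prod_gcd_of_forall_dvd_prod fun x => ?_
  have hk : Fintype.card (Σ i, Fin (κ i)) = k := by simp [hκ]
  have := minorGcd_dvd_det_submatrix (blockDiagonal' M)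
    (Sigma.map id fun i => (x i).1) (Sigma.map id fun i => (x i).2)
  rwa [hk, blockDiagonal'_submatrix_sigmaMap, det_blockDiagonal'_eq_prod] at this

theorem prod_minorGcd_dvd_det_blockDiagonal'_submatrix
    (h : ∀ i, Fintype.card {j // (f j).1 = i} = Fintype.card {j // (g j).1 = i}) :
    ∏ i, minorGcd (M i) (Fintype.card {j // (f j).1 = i}) ∣
      ((blockDiagonal' M).submatrix f g).det := by
  let e i : {j // (f j).1 = i} ≃ {j // (g j).1 = i} := Fintype.equivOfCardEq (h i)
  let eR := Equiv.sigmaFiberEquiv fun j => (f j).1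
  let eC := (Equiv.sigmaCongrRight e).trans (Equiv.sigmaFiberEquiv fun j => (g j).1)
  have hsub : ((blockDiagonal' M).submatrix f g).submatrix eR eC =
      blockDiagonal' fun i => (M i).submatrix (Sigma.fiberSnd f i) (Sigma.fiberSnd g i ∘ e i) := by
    rw [submatrix_submatrix, ← blockDiagonal'_submatrix_sigmaMap]
    congr 1
    · exact Sigma.comp_sigmaFiberEquiv f
    · exact congrArg (· ∘ Equiv.sigmaCongrRight e) (Sigma.comp_sigmaFiberEquiv g)
  calc ∏ i, minorGcd (M i) (Fintype.card {j // (f j).1 = i})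
      ∣ ∏ i, ((M i).submatrix (Sigma.fiberSnd f i) (Sigma.fiberSnd g i ∘ e i)).det :=
        prod_dvd_prod_of_dvd _ _ fun i _ => minorGcd_dvd_det_submatrix _ _ _
    _ = (((blockDiagonal' M).submatrix f g).submatrix eR eC).det := by
        rw [hsub, det_blockDiagonal'_eq_prod]
    _ ∣ ((blockDiagonal' M).submatrix f g).det := by
        rw [det_submatrix_equiv, Int.cast_id, Units.mul_left_dvd]

end BlockDiagonal

/-- For a block-diagonal matrix with (not necessarily square)
diagonal blocks `B 1, …, B n`, `det(M, k)` equals the gcd over all tuples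
`(k₁, …, kₙ)` with `k₁ + ⋯ + kₙ = k` of `det(B 1, k₁) ⋯ det(B n, kₙ)`. -/
theorem stmt6 (n k : ℕ) (r s : Fin n → ℕ)
    (B : ∀ i, Matrix (Fin (r i)) (Fin (s i)) ℤ) :
    minorGcd (Matrix.blockDiagonal' B) k =
      ((Finset.univ : Finset (Fin n → Fin (k + 1))).filter
          fun κ => ∑ i, (κ i : ℕ) = k).gcd
        fun κ => ∏ i, minorGcd (B i) (κ i) := by
  refine dvd_antisymm_of_normalize_eq normalize_gcd normalize_gcd
    (dvd_gcd fun κ hκ => minorGcd_blockDiagonal'_dvd_prod B _ (mem_filter.mp hκ).2)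
    (dvd_gcd fun fg _ => ?_)
  obtain ⟨f, g⟩ := fg
  by_cases h : ∀ i, Fintype.card {j // (f j).1 = i} = Fintype.card {j // (g j).1 = i}
  · let κ i : Fin (k + 1) := ⟨Fintype.card {j // (f j).1 = i},
      Nat.lt_succ_of_le ((Fintype.card_subtype_le _).trans (Fintype.card_fin k).le)⟩
    have hκ : κ ∈ univ.filter fun κ : Fin n → Fin (k + 1) => ∑ i, (κ i : ℕ) = k := by
      simpa [κ] using Fintype.sum_card_fiber f
    exact (gcd_dvd hκ).trans (prod_minorGcd_dvd_det_blockDiagonal'_submatrix B f g h)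
  · rw [det_blockDiagonal'_submatrix_eq_zero B f g h]
    exact dvd_zero _
end

section
/- Let G be the semidirect product ℤ/p ⋊ ℤ/m where p is prime and the generator of ℤ/m acts by multiplication by k with k of multiplicative order m modulo p and m > 1. If H is a subgroup of G whose projection to ℤ/m is surjective and which contains two distinct elements with the same ℤ/m-component, then H = G. -/
/-! The quotient `g * g'⁻¹` of two distinct elements of `H` with the same `ℤ/m`-component is a
nontrivial element of the normal factor `ℤ/p`. Since `ℤ/p` has prime order, `H` therefore
contains all of `ℤ/p`, and together with the surjectivity onto `ℤ/m` this gives `H = G`. -/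

namespace SemidirectProduct

variable {N G : Type*} [Group N] [Group G] {φ : G →* MulAut N}

lemma mul_inv_mem_range_inl {x y : N ⋊[φ] G} (h : x.right = y.right) :
    x * y⁻¹ ∈ (inl : N →* N ⋊[φ] G).range := by
  rw [range_inl_eq_ker_rightHom, MonoidHom.mem_ker]
  simp [h]

lemma comap_inl_ne_bot {H : Subgroup (N ⋊[φ] G)} {x y : N ⋊[φ] G} (hx : x ∈ H) (hy : y ∈ H)
    (hne : x ≠ y) (h : x.right = y.right) : H.comap inl ≠ ⊥ := by
  obtain ⟨n, hn⟩ := mul_inv_mem_range_inl h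
  rw [Subgroup.ne_bot_iff_exists_ne_one]
  refine ⟨⟨n, by simpa [hn] using H.mul_mem hx (H.inv_mem hy)⟩, ?_⟩
  rintro ⟨⟩
  rw [map_one, eq_comm, mul_inv_eq_one] at hn
  exact hne hn

lemma eq_top_of_comap_inl_eq_top {H : Subgroup (N ⋊[φ] G)} (hN : H.comap inl = ⊤)
    (hG : ∀ g : G, ∃ x ∈ H, x.right = g) : H = ⊤ := by
  refine (Subgroup.eq_top_iff' H).mpr fun x => ?_
  obtain ⟨y, hy, hyx⟩ := hG x.right
  obtain ⟨n, hn⟩ := mul_inv_mem_range_inl hyx.symm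
  have hxy : x * y⁻¹ ∈ H := hn ▸ (Subgroup.mem_comap.mp (hN ▸ Subgroup.mem_top n))
  simpa using H.mul_mem hxy hy

end SemidirectProduct

theorem stmt11_general (p m : ℕ) [Fact p.Prime]
    (φ : Multiplicative (ZMod m) →* MulAut (Multiplicative (ZMod p)))
    (H : Subgroup (Multiplicative (ZMod p) ⋊[φ] Multiplicative (ZMod m)))
    (hsurj : ∀ b : Multiplicative (ZMod m), ∃ g ∈ H, g.right = b)
    (htwo : ∃ g ∈ H, ∃ g' ∈ H, g ≠ g' ∧ g.right = g'.right) :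
    H = ⊤ := by
  obtain ⟨g, hg, g', hg', hne, hr⟩ := htwo
  have : Fact (Nat.card (Multiplicative (ZMod p))).Prime := by
    rwa [Nat.card_eq_fintype_card, Fintype.card_multiplicative, ZMod.card]
  refine SemidirectProduct.eq_top_of_comap_inl_eq_top ?_ hsurj
  exact ((H.comap SemidirectProduct.inl).eq_bot_or_eq_top_of_prime_card).resolve_left
    (SemidirectProduct.comap_inl_ne_bot hg hg' hne hr)

/-- Let `G = (ℤ/p) ⋊ (ℤ/m)` with `p` prime, `m > 1`, the
generator of `ℤ/m` acting by multiplication by `k` where `k` has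
multiplicative order `m` mod `p`. If a subgroup `H` of `G` projects onto
`ℤ/m` and contains two distinct elements with the same `ℤ/m`-component,
then `H = G`. -/
theorem stmt11 (p m k : ℕ) [Fact p.Prime] (hm : 1 < m)
    (hk : orderOf (k : ZMod p) = m)
    (φ : Multiplicative (ZMod m) →* MulAut (Multiplicative (ZMod p)))
    (hφ : ∀ x : ZMod p,
      (φ (Multiplicative.ofAdd (1 : ZMod m)) (Multiplicative.ofAdd x)).toAdd =
        (k : ZMod p) * x)
    (H : Subgroup (Multiplicative (ZMod p) ⋊[φ] Multiplicative (ZMod m)))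
    (hsurj : ∀ b : Multiplicative (ZMod m), ∃ g ∈ H, g.right = b)
    (htwo : ∃ g ∈ H, ∃ g' ∈ H, g ≠ g' ∧ g.right = g'.right) :
    H = ⊤ :=
  stmt11_general p m φ H hsurj htwo
end
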